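/- For all natural numbers h ≤ ℓ ≤ k, the word ψ(h,ℓ) is a prefix of ψ(h,k), and the word ψ(ℓ,k) is a suffix of ψ(h,k). -/
import Mathlib


/-- S⁻¹: move the last letter of a nonempty word to the front. -/
def sInv (w : List ℕ) : List ℕ := w.rotate (w.length - 1)

/-- Apply a substitution `f` letterwise to a word (the morphism determined by `f`). -/
def applyM (f : ℕ → List ℕ) (w : List ℕ) : List ℕ := (w.map f).flatten

/-- Fuel-indexed approximation of the morphism φ: `phiAux n` agrees with φ on all
letters `c < n`.  (Computing φ^c(00) only uses φ on letters smaller than `c`, so the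
recursion is well-founded in the fuel.) -/
def phiAux : ℕ → ℕ → List ℕ
  | 0, _ => []
  | n + 1, c => sInv ((applyM (phiAux n))^[c] [0, 0]) ++ [c + 1]

/-- The morphism φ on letters: φ(h) = S⁻¹(φ^h(00))·(h+1).
In particular φ(0) = 001 and φ(1) = 1001002. -/
def phi (c : ℕ) : List ℕ := phiAux (c + 1) c

/-- The morphism φ on words. -/
def phiW (w : List ℕ) : List ℕ := applyM phi w

/-- ψ(h,k) = φ^(k−h)(h), the lexicographically least overlap-free word starting with
`h` and ending with `k` (for h ≤ k). -/
def psi (h k : ℕ) : List ℕ := phiW^[k - h] [h]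

lemma applyM_append (f : ℕ → List ℕ) (u v : List ℕ) :
    applyM f (u ++ v) = applyM f u ++ applyM f v := by
  simp [applyM]

lemma phiW_append (u v : List ℕ) : phiW (u ++ v) = phiW u ++ phiW v :=
  applyM_append _ _ _

lemma phiW_iter_append (n : ℕ) (u v : List ℕ) :
    phiW^[n] (u ++ v) = phiW^[n] u ++ phiW^[n] v := by
  induction n generalizing u v with
  | zero => simp
  | succ n ih => simp [Function.iterate_succ_apply, phiW_append, ih]

lemma sInv_concat (Y : List ℕ) (c : ℕ) : sInv (Y ++ [c]) = c :: Y := by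
  have hl : (Y ++ [c]).length - 1 = Y.length := by simp
  rw [sInv, hl, List.rotate_eq_drop_append_take (by simp),
    List.drop_left' rfl, List.take_left' rfl]
  rfl

lemma iter_last (c : ℕ) : ∀ i, i ≤ c →
    ∃ Y, (applyM (phiAux c))^[i] [0, 0] = Y ++ [i] := by
  intro i
  induction i with
  | zero => intro _; exact ⟨[0], rfl⟩
  | succ i ih =>
    intro hic
    obtain ⟨Y, hY⟩ := ih (by omega)
    obtain ⟨m, rfl⟩ : ∃ m, c = m + 1 := ⟨c - 1, by omega⟩
    refine ⟨applyM (phiAux (m + 1)) Y ++ sInv ((applyM (phiAux m))^[i] [0, 0]), ?_⟩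
    rw [Function.iterate_succ_apply', hY, applyM_append]
    simp [applyM, phiAux, List.append_assoc]

lemma phi_head (c : ℕ) : ∃ t, phi c = c :: t := by
  obtain ⟨Y, hY⟩ := iter_last c c le_rfl
  refine ⟨Y ++ [c + 1], ?_⟩
  show phiAux (c + 1) c = _
  rw [phiAux, hY, sInv_concat]
  rfl

lemma phi_last (c : ℕ) : ∃ s, phi c = s ++ [c + 1] :=
  ⟨sInv ((applyM (phiAux c))^[c] [0, 0]), rfl⟩

lemma prefix_step (n h : ℕ) : phiW^[n] [h] <+: phiW^[n + 1] [h] := by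
  obtain ⟨t, ht⟩ := phi_head h
  have key : phiW^[n + 1] [h] = phiW^[n] [h] ++ phiW^[n] t := by
    rw [Function.iterate_succ_apply]
    have h2 : phiW [h] = [h] ++ t := by simp [phiW, applyM, ht]
    rw [h2, phiW_iter_append]
  exact key ▸ List.prefix_append _ _

lemma prefix_le (n m h : ℕ) : phiW^[n] [h] <+: phiW^[n + m] [h] := by
  induction m with
  | zero => simp
  | succ m ih => exact ih.trans (prefix_step (n + m) h)

lemma suffix_step (n h : ℕ) : phiW^[n] [h + 1] <:+ phiW^[n + 1] [h] := by
  obtain ⟨s, hs⟩ := phi_last h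
  have key : phiW^[n + 1] [h] = phiW^[n] s ++ phiW^[n] [h + 1] := by
    rw [Function.iterate_succ_apply]
    have h2 : phiW [h] = s ++ [h + 1] := by simp [phiW, applyM, hs]
    rw [h2, phiW_iter_append]
  exact key ▸ List.suffix_append _ _

lemma suffix_le (m : ℕ) : ∀ n h, phiW^[n] [h + m] <:+ phiW^[n + m] [h] := by
  induction m with
  | zero => intro n h; simp
  | succ m ih =>
    intro n h
    have h1 := ih n (h + 1)
    have e : h + 1 + m = h + (m + 1) := by omega
    rw [e] at h1
    exact h1.trans (suffix_step (n + m) h)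

/-- For h ≤ ℓ ≤ k, ψ(h,ℓ) is a prefix of ψ(h,k) and ψ(ℓ,k) is a suffix of ψ(h,k). -/
theorem psi_prefix_suffix (h l k : ℕ) (h1 : h ≤ l) (h2 : l ≤ k) :
    psi h l <+: psi h k ∧ psi l k <:+ psi h k := by
  constructor
  · have hp := prefix_le (l - h) (k - l) h
    have e : l - h + (k - l) = k - h := by omega
    rw [e] at hp
    exact hp
  · have hs := suffix_le (l - h) (k - l) h
    have e1 : h + (l - h) = l := by omega
    have e2 : k - l + (l - h) = k - h := by omega
    rw [e1, e2] at hs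
    exact hs
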